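/- Let η > 0, p ∈ (0,1) and ξ > η. Then the function ζ(α) = ( ξ − (α·p + η) ) / √( 2·(α·p·(1−p) + η) ) is convex on (0, ∞), i.e., its second derivative with respect to α is nonnegative for all α > 0. -/

import Mathlib

open Real Set

/-!
In the variable `u = 2(αp(1-p) + η)`, which is affine in `α`, the statistic reads
`A u^{-1/2} - B u^{1/2}` with `A, B ≥ 0`. Both terms are convex on `u > 0`
(`u ↦ u^{-1/2}` is the decreasing convex `x ↦ x⁻¹` composed with the concave `√`),
and precomposition with an affine map preserves convexity.
-/

lemma Real.sqrt_image_Ioi_zero : Real.sqrt '' Ioi 0 = Ioi 0 := by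
  ext y
  constructor
  · rintro ⟨x, hx, rfl⟩
    exact Real.sqrt_pos.2 hx
  · intro hy
    exact ⟨y ^ 2, pow_pos (mem_Ioi.1 hy) 2, Real.sqrt_sq (le_of_lt hy)⟩

lemma concaveOn_sqrt_Ioi : ConcaveOn ℝ (Ioi 0) (√· : ℝ → ℝ) :=
  strictConcaveOn_sqrt.concaveOn.subset Ioi_subset_Ici_self (convex_Ioi 0)

lemma convexOn_inv_sqrt : ConvexOn ℝ (Ioi 0) fun u : ℝ => (√u)⁻¹ := by
  refine ConvexOn.comp_concaveOn (g := fun x : ℝ => x⁻¹) ?_ concaveOn_sqrt_Ioi ?_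
  all_goals rw [Real.sqrt_image_Ioi_zero]
  · exact (convexOn_zpow (-1)).congr fun x _ => zpow_neg_one x
  · exact fun x hx y _ hxy => inv_anti₀ hx hxy

lemma convexOn_sub_mul_div_sqrt {A B : ℝ} (hA : 0 ≤ A) (hB : 0 ≤ B) :
    ConvexOn ℝ (Ioi 0) fun u => (A - B * u) / √u := by
  refine ((convexOn_inv_sqrt.smul hA).sub (concaveOn_sqrt_Ioi.smul hB)).congr fun u _ => ?_
  simp only [Pi.sub_apply, smul_eq_mul]
  rw [sub_div, mul_div_assoc, Real.div_sqrt, div_eq_mul_inv]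

lemma convexOn_sub_mul_div_sqrt_mul_add {a b c d : ℝ} (hc : 0 < c) (hb : 0 ≤ b)
    (habcd : 0 ≤ a * c + b * d) :
    ConvexOn ℝ {x | 0 < c * x + d} fun x => (a - b * x) / √(c * x + d) := by
  let g : ℝ →ᵃ[ℝ] ℝ := ⟨fun x => c * x + d, c • LinearMap.id, fun x v => by
    simp only [LinearMap.smul_apply, LinearMap.id_apply, smul_eq_mul, vadd_eq_add]; ring⟩
  -- substituting `u = c x + d` turns `a - b x` into `(a c + b d) / c - (b / c) u`
  refine ((convexOn_sub_mul_div_sqrt (div_nonneg habcd hc.le) (div_nonneg hb hc.le)).comp_affineMap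
    g).congr fun x _ => ?_
  simp only [Function.comp_apply, g, AffineMap.coe_mk]
  congr 1
  field_simp
  ring

theorem zeta_convexOn (η p ξ : ℝ) (hη : 0 < η) (hp : p ∈ Set.Ioo (0:ℝ) 1) (hξ : η < ξ) :
    ConvexOn ℝ (Set.Ioi (0:ℝ))
      (fun α => (ξ - (α * p + η)) / Real.sqrt (2 * (α * p * (1 - p) + η))) := by
  obtain ⟨hp0, hp1⟩ := hp
  have h1p : 0 < 1 - p := sub_pos.2 hp1
  have hξη : 0 < ξ - η := sub_pos.2 hξ
  have hc : 0 < 2 * p * (1 - p) := by positivity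
  have habcd : 0 ≤ (ξ - η) * (2 * p * (1 - p)) + p * (2 * η) := by positivity
  refine ((convexOn_sub_mul_div_sqrt_mul_add hc hp0.le habcd).subset (fun α hα => ?_)
    (convex_Ioi 0)).congr fun α _ => ?_
  · change 0 < 2 * p * (1 - p) * α + 2 * η
    have : (0:ℝ) < α := hα
    positivity
  · ring_nf
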